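/- arXiv:2312.13827 — 4 statements merged into one kernel-verified Lean document; each statement's English description precedes it below -/
import Mathlib

section
/- For integers d ≥ 3 and κ > 0, ℓ > 0, the equation (-1 - iℓκ)^d - (-1 + iℓκ)^d = 0 holds if and only if κ = ℓ^{-1} tan(mπ/d) for some integer m with 1 ≤ m ≤ ⌊(d-1)/2⌋. -/
open Real Complex

theorem star_graph_R_negative_spectrum
    (d : ℕ) (hd : 3 ≤ d) (κ ℓ : ℝ) (hκ : 0 < κ) (hℓ : 0 < ℓ) :
    ((-1 - Complex.I * (ℓ : ℂ) * (κ : ℂ)) ^ d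
      - (-1 + Complex.I * (ℓ : ℂ) * (κ : ℂ)) ^ d = 0)
    ↔ ∃ m : ℕ, 1 ≤ m ∧ m ≤ (d - 1) / 2 ∧
        κ = ℓ⁻¹ * Real.tan (m * Real.pi / d) := by
  have hd0 : 0 < d := by omega
  have hdR : (0 : ℝ) < d := by exact_mod_cast hd0
  have hπ := Real.pi_pos
  set t : ℝ := ℓ * κ with htdef
  have htpos : 0 < t := mul_pos hℓ hκ
  set φ : ℝ := Real.arctan t with hφdef
  have hφpos : 0 < φ := by
    rw [hφdef, ← Real.arctan_zero]
    exact Real.arctan_strictMono htpos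
  have hφlt : φ < π / 2 := Real.arctan_lt_pi_div_two t
  set r : ℝ := Real.sqrt (1 + t ^ 2) with hrdef
  have hrpos : (0 : ℝ) < r := Real.sqrt_pos.2 (by positivity)
  have hrC : (r : ℂ) ≠ 0 := by exact_mod_cast hrpos.ne'
  have hcos : Real.cos φ = 1 / r := Real.cos_arctan t
  have hsin : Real.sin φ = t / r := Real.sin_arctan t
  have hA : (1 : ℂ) + Complex.I * t = r * Complex.exp (φ * Complex.I) := by
    rw [Complex.exp_mul_I, ← Complex.ofReal_cos, ← Complex.ofReal_sin, hcos, hsin]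
    push_cast
    field_simp
  have hB : (1 : ℂ) - Complex.I * t = r * Complex.exp (-φ * Complex.I) := by
    rw [Complex.exp_mul_I, Complex.cos_neg, Complex.sin_neg,
      ← Complex.ofReal_cos, ← Complex.ofReal_sin, hcos, hsin]
    push_cast
    field_simp
    ring
  have key : ((-1 - Complex.I * (ℓ : ℂ) * (κ : ℂ)) ^ d
      - (-1 + Complex.I * (ℓ : ℂ) * (κ : ℂ)) ^ d = 0)
      ↔ ∃ n : ℤ, (d : ℝ) * φ = n * π := by
    have h1 : (-1 - Complex.I * (ℓ : ℂ) * (κ : ℂ)) = -(1 + Complex.I * t) := by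
      rw [htdef]; push_cast; ring
    have h2 : (-1 + Complex.I * (ℓ : ℂ) * (κ : ℂ)) = -(1 - Complex.I * t) := by
      rw [htdef]; push_cast; ring
    have h3 : (-(1 + Complex.I * t)) ^ d - (-(1 - Complex.I * t)) ^ d
        = (-1) ^ d * ((1 + Complex.I * t) ^ d - (1 - Complex.I * t) ^ d) := by
      rw [show (-(1 + Complex.I * (t : ℂ))) = (-1) * (1 + Complex.I * t) by ring,
        show (-(1 - Complex.I * (t : ℂ))) = (-1) * (1 - Complex.I * t) by ring,
        mul_pow, mul_pow]
      ring
    rw [h1, h2, h3, mul_eq_zero,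
      or_iff_right (pow_ne_zero d (neg_ne_zero.2 one_ne_zero)), sub_eq_zero]
    constructor
    · intro h
      rw [hA, hB, mul_pow, mul_pow] at h
      have h' := mul_left_cancel₀ (pow_ne_zero d hrC) h
      rw [← Complex.exp_nat_mul, ← Complex.exp_nat_mul,
        Complex.exp_eq_exp_iff_exists_int] at h'
      obtain ⟨n, hn⟩ := h'
      refine ⟨n, ?_⟩
      have hc : ((2 * d * φ : ℝ) : ℂ) * Complex.I = ((2 * n * π : ℝ) : ℂ) * Complex.I := by
        push_cast
        linear_combination hn
      have hc' : ((2 * d * φ : ℝ) : ℂ) = ((2 * n * π : ℝ) : ℂ) :=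
        mul_right_cancel₀ Complex.I_ne_zero hc
      have : (2 * (d : ℝ) * φ) = 2 * (n : ℝ) * π := by exact_mod_cast hc'
      linarith
    · rintro ⟨n, hn⟩
      rw [hA, hB, mul_pow, mul_pow, ← Complex.exp_nat_mul, ← Complex.exp_nat_mul]
      congr 1
      rw [Complex.exp_eq_exp_iff_exists_int]
      refine ⟨n, ?_⟩
      have hc : (((d : ℝ) * φ : ℝ) : ℂ) = (((n : ℝ) * π : ℝ) : ℂ) := by exact_mod_cast hn
      push_cast at hc ⊢
      linear_combination Complex.I * 2 * hc
  rw [key]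
  constructor
  · rintro ⟨n, hn⟩
    have hn0 : 0 < n := by
      have h0 : (0 : ℝ) < (n : ℝ) * π := hn ▸ mul_pos hdR hφpos
      by_contra h
      push_neg at h
      have : (n : ℝ) ≤ 0 := by exact_mod_cast h
      nlinarith
    have h2n : 2 * n < d := by
      have h1 : (n : ℝ) * π < (d : ℝ) * (π / 2) := hn ▸ by nlinarith
      have : (2 * n : ℝ) < d := by nlinarith
      exact_mod_cast this
    refine ⟨n.toNat, by omega, by omega, ?_⟩
    have hmn : ((n.toNat : ℕ) : ℝ) = (n : ℝ) := by
      exact_mod_cast Int.toNat_of_nonneg hn0.le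
    have hφeq : φ = (n : ℝ) * π / d := by
      rw [eq_div_iff hdR.ne']; linarith
    have hteq : t = Real.tan ((n : ℝ) * π / d) := by
      rw [← hφeq, hφdef, Real.tan_arctan]
    rw [hmn, ← hteq, htdef]
    field_simp
  · rintro ⟨m, hm1, hm2, hκeq⟩
    have h2m : 2 * m < d := by omega
    have hx1 : (0 : ℝ) < (m : ℝ) * π / d := by
      apply div_pos (mul_pos (by exact_mod_cast hm1) hπ) hdR
    have hx2 : (m : ℝ) * π / d < π / 2 := by
      rw [div_lt_div_iff₀ hdR two_pos]
      have : (2 * m : ℝ) < d := by exact_mod_cast h2m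
      nlinarith
    have ht' : t = Real.tan ((m : ℝ) * π / d) := by
      rw [htdef, hκeq]; field_simp
    refine ⟨m, ?_⟩
    have hφeq : φ = (m : ℝ) * π / d := by
      rw [hφdef, ht', Real.arctan_tan (by linarith) hx2]
    rw [hφeq]
    field_simp
    norm_cast
end

section
/- For integers d ≥ 3 and κ > 0, ℓ > 0, the equation (-1 - iℓκ)^d - (1 - iℓκ)^d = 0 holds if and only if κ = ℓ^{-1} cot(mπ/d) for some integer m with 1 ≤ m ≤ ⌊d/2⌋ and cot(mπ/d) > 0. -/
open Real Complex

private lemma cot_eq_inv_tan' (x : ℝ) : Real.cot x = (Real.tan x)⁻¹ := by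
  rw [Real.cot_eq_cos_div_sin, Real.tan_eq_sin_div_cos, inv_div]

theorem star_graph_minusR_negative_spectrum
    (d : ℕ) (hd : 3 ≤ d) (κ ℓ : ℝ) (hκ : 0 < κ) (hℓ : 0 < ℓ) :
    ((-1 - Complex.I * (ℓ : ℂ) * (κ : ℂ)) ^ d
      - (1 - Complex.I * (ℓ : ℂ) * (κ : ℂ)) ^ d = 0)
    ↔ ∃ m : ℕ, 1 ≤ m ∧ m ≤ d / 2 ∧ 0 < Real.cot (m * Real.pi / d) ∧
        κ = ℓ⁻¹ * Real.cot (m * Real.pi / d) := by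
  have hdR : (0:ℝ) < d := by
    have : (3:ℝ) ≤ d := by exact_mod_cast hd
    linarith
  have hπ := Real.pi_pos
  set t := ℓ * κ with ht_def
  have ht : 0 < t := mul_pos hℓ hκ
  set α := Real.arctan t with hα_def
  have hα0 : 0 < α := by
    rw [hα_def, ← Real.arctan_zero]
    exact Real.arctan_strictMono ht
  have hα1 : α < π/2 := Real.arctan_lt_pi_div_two t
  have ht_tan : Real.tan α = t := Real.tan_arctan t
  set s : ℝ := Real.sqrt (1 + t^2) with hs_def
  have hs : 0 < s := Real.sqrt_pos.mpr (by positivity)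
  have hsne : (s:ℂ) ≠ 0 := by exact_mod_cast hs.ne'
  have hcos : Real.cos α = 1 / s := Real.cos_arctan t
  have hsin : Real.sin α = t / s := Real.sin_arctan t
  have h1 : (s:ℂ) * Complex.exp ((α:ℂ) * I) = 1 + (t:ℂ) * I := by
    rw [Complex.exp_mul_I, ← Complex.ofReal_cos, ← Complex.ofReal_sin, hcos, hsin]
    push_cast
    field_simp
  have h3 : (s:ℂ) * Complex.exp (((-α : ℝ):ℂ) * I) = 1 - (t:ℂ) * I := by
    rw [Complex.exp_mul_I, ← Complex.ofReal_cos, ← Complex.ofReal_sin,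
      Real.cos_neg, Real.sin_neg, hcos, hsin]
    push_cast
    field_simp
    ring
  have h2 : (s:ℂ) * Complex.exp (((α + π : ℝ):ℂ) * I) = -1 - (t:ℂ) * I := by
    have harg : (((α + π : ℝ):ℂ)) * I = (α:ℂ) * I + (π:ℝ) * I := by push_cast; ring
    rw [harg, Complex.exp_add, Complex.exp_pi_mul_I]
    have : (s:ℂ) * (Complex.exp ((α:ℂ) * I) * (-1)) = -((s:ℂ) * Complex.exp ((α:ℂ) * I)) := by
      ring
    rw [this, h1]
    ring
  have hrw : Complex.I * (ℓ:ℂ) * (κ:ℂ) = (t:ℂ) * I := by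
    rw [ht_def]; push_cast; ring
  rw [hrw]
  have key : ((-1 - (t:ℂ) * I) ^ d - (1 - (t:ℂ) * I) ^ d = 0)
      ↔ ∃ n : ℤ, (d:ℝ) * (α + π) = (d:ℝ) * (-α) + n * (2 * π) := by
    rw [← h2, ← h3, sub_eq_zero, mul_pow, mul_pow,
      mul_right_inj' (pow_ne_zero d hsne),
      ← Complex.exp_nat_mul, ← Complex.exp_nat_mul,
      Complex.exp_eq_exp_iff_exists_int]
    constructor
    · rintro ⟨n, hn⟩
      refine ⟨n, ?_⟩
      have h' : ((d * (α + π) : ℝ) : ℂ) * I = ((d * (-α) + n * (2*π) : ℝ) : ℂ) * I := by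
        push_cast at hn ⊢
        linear_combination hn
      have h'' := mul_right_cancel₀ Complex.I_ne_zero h'
      exact_mod_cast h''
    · rintro ⟨n, hn⟩
      refine ⟨n, ?_⟩
      have h' : ((d * (α + π) : ℝ) : ℂ) = ((d * (-α) + n * (2*π) : ℝ) : ℂ) := by
        exact_mod_cast hn
      push_cast at h' ⊢
      linear_combination I * h'
  rw [key]
  constructor
  · rintro ⟨n, hn⟩
    have h2dα : 2 * (d:ℝ) * α = (2*(n:ℝ) - d) * π := by
      push_cast at hn ⊢
      linear_combination hn
    have hn1 : (d:ℝ) < 2*(n:ℝ) := by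
      nlinarith [mul_pos (mul_pos (by norm_num : (0:ℝ) < 2) hdR) hα0]
    have hn2 : (n:ℝ) < (d:ℝ) := by
      nlinarith [mul_pos hdR (sub_pos.mpr hα1)]
    have hn1' : (d:ℤ) < 2*n := by exact_mod_cast hn1
    have hn2' : n < (d:ℤ) := by exact_mod_cast hn2
    have hn0 : 0 ≤ n := by omega
    set m : ℕ := d - n.toNat with hm_def
    have hnn : (n.toNat : ℤ) = n := Int.toNat_of_nonneg hn0
    have hnd : n.toNat ≤ d := by omega
    have hmR : (m:ℝ) = (d:ℝ) - (n:ℝ) := by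
      rw [hm_def]
      push_cast [Nat.cast_sub hnd]
      rw [show ((n.toNat : ℝ)) = ((n.toNat : ℤ) : ℝ) by push_cast; ring, hnn]
    refine ⟨m, by omega, by omega, ?_, ?_⟩ <;>
    · have hαm : α = π/2 - (m:ℝ)*π/(d:ℝ) := by
        rw [hmR]
        field_simp
        linear_combination h2dα
      have hcot : Real.cot ((m:ℝ)*π/(d:ℝ)) = t := by
        rw [cot_eq_inv_tan', ← Real.tan_pi_div_two_sub, ← hαm, ht_tan]
      rw [hcot]
      first
        | exact ht
        | (rw [ht_def]; field_simp)
  · rintro ⟨m, hm1, hm2, hcotpos, hκeq⟩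
    have hm2' : 2*m ≤ d := by omega
    have hmle : (m:ℝ)*π/(d:ℝ) ≤ π/2 := by
      rw [div_le_div_iff₀ hdR (by norm_num : (0:ℝ) < 2)]
      have : (2:ℝ)*m ≤ d := by exact_mod_cast hm2'
      nlinarith
    have hstrict : (m:ℝ)*π/(d:ℝ) < π/2 := by
      rcases lt_or_eq_of_le hmle with h | h
      · exact h
      · rw [h] at hcotpos
        rw [Real.cot_eq_cos_div_sin, Real.cos_pi_div_two] at hcotpos
        simp at hcotpos
    have hmpos : (0:ℝ) < m := by exact_mod_cast hm1
    have hppos : 0 < (m:ℝ)*π/(d:ℝ) := by positivity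
    have htval : t = Real.cot ((m:ℝ)*π/(d:ℝ)) := by
      rw [ht_def, hκeq]
      field_simp
    have hβ : α = π/2 - (m:ℝ)*π/(d:ℝ) := by
      rw [hα_def, htval, cot_eq_inv_tan', ← Real.tan_pi_div_two_sub, Real.arctan_tan]
      · linarith
      · linarith
    refine ⟨(d:ℤ) - m, ?_⟩
    have h2dα : 2*(d:ℝ)*α = (d:ℝ)*π - 2*(m:ℝ)*π := by
      rw [hβ]
      field_simp
    push_cast
    linear_combination h2dα
end

section
/- For every κ > 0, a > 0 and ℓ₃, ℓ₄ > 0, the expression ρ(κ) := (κ²ℓ₄² + 1)(κ²ℓ₃² + 1) cosh(2κa) - (κ⁴ℓ₄²ℓ₃² - κ²(ℓ₄² - 4ℓ₄ℓ₃ + ℓ₃²) + 1) is strictly positive; in particular ρ(κ) > 2κ²(ℓ₄ - ℓ₃)². -/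
/-! Expanding the product shows
`ρ = (κ²ℓ₄² + 1)(κ²ℓ₃² + 1)(cosh(2κa) - 1) + 2κ²(ℓ₄ - ℓ₃)²`,
and the first summand is positive because `cosh x > 1` for `x ≠ 0`. -/

open Real

theorem cosh_sub_eq_mul_cosh_sub_one_add (κ ℓ₃ ℓ₄ x : ℝ) :
    (κ ^ 2 * ℓ₄ ^ 2 + 1) * (κ ^ 2 * ℓ₃ ^ 2 + 1) * cosh x
        - (κ ^ 4 * ℓ₄ ^ 2 * ℓ₃ ^ 2 - κ ^ 2 * (ℓ₄ ^ 2 - 4 * ℓ₄ * ℓ₃ + ℓ₃ ^ 2) + 1)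
      = (κ ^ 2 * ℓ₄ ^ 2 + 1) * (κ ^ 2 * ℓ₃ ^ 2 + 1) * (cosh x - 1)
        + 2 * κ ^ 2 * (ℓ₄ - ℓ₃) ^ 2 := by
  ring

theorem lt_cosh_sub_of_ne_zero (κ ℓ₃ ℓ₄ : ℝ) {x : ℝ} (hx : x ≠ 0) :
    2 * κ ^ 2 * (ℓ₄ - ℓ₃) ^ 2 <
      (κ ^ 2 * ℓ₄ ^ 2 + 1) * (κ ^ 2 * ℓ₃ ^ 2 + 1) * cosh x
        - (κ ^ 4 * ℓ₄ ^ 2 * ℓ₃ ^ 2 - κ ^ 2 * (ℓ₄ ^ 2 - 4 * ℓ₄ * ℓ₃ + ℓ₃ ^ 2) + 1) := by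
  have hcosh : 0 < cosh x - 1 := sub_pos.mpr (one_lt_cosh.mpr hx)
  rw [cosh_sub_eq_mul_cosh_sub_one_add]
  have : 0 < (κ ^ 2 * ℓ₄ ^ 2 + 1) * (κ ^ 2 * ℓ₃ ^ 2 + 1) * (cosh x - 1) := by positivity
  linarith

theorem rho_positive_general (κ a ℓ₃ ℓ₄ : ℝ) (hκ : 0 < κ) (ha : 0 < a) :
    2 * κ ^ 2 * (ℓ₄ - ℓ₃) ^ 2 <
      (κ ^ 2 * ℓ₄ ^ 2 + 1) * (κ ^ 2 * ℓ₃ ^ 2 + 1) * Real.cosh (2 * κ * a)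
        - (κ ^ 4 * ℓ₄ ^ 2 * ℓ₃ ^ 2 - κ ^ 2 * (ℓ₄ ^ 2 - 4 * ℓ₄ * ℓ₃ + ℓ₃ ^ 2) + 1)
    ∧ 0 <
      (κ ^ 2 * ℓ₄ ^ 2 + 1) * (κ ^ 2 * ℓ₃ ^ 2 + 1) * Real.cosh (2 * κ * a)
        - (κ ^ 4 * ℓ₄ ^ 2 * ℓ₃ ^ 2 - κ ^ 2 * (ℓ₄ ^ 2 - 4 * ℓ₄ * ℓ₃ + ℓ₃ ^ 2) + 1) := by
  have hlt := lt_cosh_sub_of_ne_zero κ ℓ₃ ℓ₄ (by positivity : 2 * κ * a ≠ 0)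
  exact ⟨hlt, lt_of_le_of_lt (by positivity) hlt⟩

theorem rho_positive (κ a ℓ₃ ℓ₄ : ℝ) (hκ : 0 < κ) (ha : 0 < a)
    (h3 : 0 < ℓ₃) (h4 : 0 < ℓ₄) :
    2 * κ ^ 2 * (ℓ₄ - ℓ₃) ^ 2 <
      (κ ^ 2 * ℓ₄ ^ 2 + 1) * (κ ^ 2 * ℓ₃ ^ 2 + 1) * Real.cosh (2 * κ * a)
        - (κ ^ 4 * ℓ₄ ^ 2 * ℓ₃ ^ 2 - κ ^ 2 * (ℓ₄ ^ 2 - 4 * ℓ₄ * ℓ₃ + ℓ₃ ^ 2) + 1)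
    ∧ 0 <
      (κ ^ 2 * ℓ₄ ^ 2 + 1) * (κ ^ 2 * ℓ₃ ^ 2 + 1) * Real.cosh (2 * κ * a)
        - (κ ^ 4 * ℓ₄ ^ 2 * ℓ₃ ^ 2 - κ ^ 2 * (ℓ₄ ^ 2 - 4 * ℓ₄ * ℓ₃ + ℓ₃ ^ 2) + 1) :=
  rho_positive_general κ a ℓ₃ ℓ₄ hκ ha
end

section
/- For ℓ₄ > 0 and a > 0, the equation (1 - κ²ℓ₄²) cosh(2κa) = κ²ℓ₄² + 1 has a solution κ ∈ (0, ℓ₄⁻¹) if and only if a > ℓ₄, and in that case the solution is unique. -/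
open Real Set
open Filter

lemma aux_sinh_lt (t : ℝ) (ht : 0 < t) : Real.sinh t < t * Real.cosh t := by
  have hmono : StrictMonoOn (fun t => t * Real.cosh t - Real.sinh t) (Set.Ici (0:ℝ)) := by
    apply strictMonoOn_of_deriv_pos (convex_Ici 0)
    · fun_prop
    · intro x hx
      rw [interior_Ici] at hx
      have hd : HasDerivAt (fun t => t * Real.cosh t - Real.sinh t)
          (1 * Real.cosh x + x * Real.sinh x - Real.cosh x) x :=
        ((hasDerivAt_id x).mul (Real.hasDerivAt_cosh x)).sub (Real.hasDerivAt_sinh x)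
      rw [hd.deriv]
      have h1 : 0 < Real.sinh x := Real.sinh_pos_iff.mpr hx
      nlinarith [mul_pos (Set.mem_Ioi.mp hx) h1]
  have := hmono (Set.self_mem_Ici) (Set.mem_Ici.mpr ht.le) ht
  simpa using this

lemma aux_anti (a : ℝ) (ha : 0 < a) :
    StrictAntiOn (fun x => Real.sinh (a*x) / Real.cosh (a*x) / x) (Set.Ioi (0:ℝ)) := by
  apply strictAntiOn_of_deriv_neg (convex_Ioi 0)
  · apply ContinuousOn.div
    · fun_prop (disch := intro x hx; exact (Real.cosh_pos _).ne')
    · fun_prop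
    · intro x hx; exact (ne_of_gt hx)
  · intro x hx
    rw [interior_Ioi] at hx
    have hx0 : (0:ℝ) < x := hx
    set c := Real.cosh (a*x) with hc
    set s := Real.sinh (a*x) with hs
    have hcpos : 0 < c := Real.cosh_pos _
    have hax : 0 < a * x := mul_pos ha hx0
    have hspos : 0 < s := Real.sinh_pos_iff.mpr hax
    have hsl : a * x < s := Real.self_lt_sinh_iff.mpr hax
    have hc1 : 1 ≤ c := Real.one_le_cosh _
    have hpyth : c ^ 2 - s ^ 2 = 1 := Real.cosh_sq_sub_sinh_sq _
    have hds : HasDerivAt (fun x => Real.sinh (a*x)) (Real.cosh (a*x) * a) x := by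
      simpa [Function.comp_def] using (Real.hasDerivAt_sinh (a*x)).comp x ((hasDerivAt_id x).const_mul a)
    have hdc : HasDerivAt (fun x => Real.cosh (a*x)) (Real.sinh (a*x) * a) x := by
      simpa [Function.comp_def] using (Real.hasDerivAt_cosh (a*x)).comp x ((hasDerivAt_id x).const_mul a)
    have hdT : HasDerivAt (fun x => Real.sinh (a*x) / Real.cosh (a*x))
        ((Real.cosh (a*x) * a * Real.cosh (a*x) - Real.sinh (a*x) * (Real.sinh (a*x) * a))
          / Real.cosh (a*x) ^ 2) x := hds.div hdc (Real.cosh_pos _).ne'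
    have hdf : HasDerivAt (fun x => Real.sinh (a*x) / Real.cosh (a*x) / x)
        (((c * a * c - s * (s * a)) / c ^ 2 * x - s / c * 1) / x ^ 2) x :=
      hdT.div (hasDerivAt_id x) hx0.ne'
    rw [hdf.deriv]
    apply div_neg_of_neg_of_pos _ (by positivity)
    have heq : (c * a * c - s * (s * a)) / c ^ 2 * x - s / c * 1 = (a * x - s * c) / c ^ 2 := by
      have h' : c * a * c - s * (s * a) = a := by linear_combination a * hpyth
      rw [h']
      field_simp
    rw [heq]
    apply div_neg_of_neg_of_pos _ (by positivity)
    nlinarith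

theorem dirichlet_negative_eigenvalue (ℓ₄ a : ℝ) (h4 : 0 < ℓ₄) (ha : 0 < a) :
    ((∃ κ ∈ Set.Ioo (0 : ℝ) ℓ₄⁻¹,
        (1 - κ ^ 2 * ℓ₄ ^ 2) * Real.cosh (2 * κ * a) = κ ^ 2 * ℓ₄ ^ 2 + 1)
      ↔ ℓ₄ < a)
    ∧ (ℓ₄ < a → ∃! κ, κ ∈ Set.Ioo (0 : ℝ) ℓ₄⁻¹ ∧
        (1 - κ ^ 2 * ℓ₄ ^ 2) * Real.cosh (2 * κ * a) = κ ^ 2 * ℓ₄ ^ 2 + 1) := by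
  -- Key equivalence: for κ > 0, the equation ↔ sinh(aκ) = ℓ₄ κ cosh(aκ)
  have key : ∀ κ : ℝ, 0 < κ →
      (((1 - κ ^ 2 * ℓ₄ ^ 2) * Real.cosh (2 * κ * a) = κ ^ 2 * ℓ₄ ^ 2 + 1)
        ↔ Real.sinh (a*κ) = ℓ₄ * κ * Real.cosh (a*κ)) := by
    intro κ hκ
    have h2 : 2 * κ * a = 2 * (a * κ) := by ring
    rw [h2, Real.cosh_two_mul]
    set c := Real.cosh (a*κ)
    set s := Real.sinh (a*κ)
    have hcpos : 0 < c := Real.cosh_pos _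
    have hspos : 0 < s := Real.sinh_pos_iff.mpr (mul_pos ha hκ)
    have hpyth : c ^ 2 - s ^ 2 = 1 := Real.cosh_sq_sub_sinh_sq _
    constructor
    · intro hP
      have hsq : s ^ 2 = (ℓ₄ * κ) ^ 2 * c ^ 2 := by nlinarith
      have hfac : (s - ℓ₄ * κ * c) * (s + ℓ₄ * κ * c) = 0 := by linear_combination hsq
      rcases mul_eq_zero.mp hfac with h | h
      · linarith
      · nlinarith [mul_pos (mul_pos h4 hκ) hcpos]
    · intro hs
      have hsq : s ^ 2 = (ℓ₄ * κ) ^ 2 * c ^ 2 := by rw [hs]; ring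
      linear_combination (1 + κ ^ 2 * ℓ₄ ^ 2) * hpyth + 2 * hsq
  -- solution implies ℓ₄ < a
  have sol_imp : ∀ κ ∈ Set.Ioo (0 : ℝ) ℓ₄⁻¹,
      (1 - κ ^ 2 * ℓ₄ ^ 2) * Real.cosh (2 * κ * a) = κ ^ 2 * ℓ₄ ^ 2 + 1 → ℓ₄ < a := by
    intro κ hκ hP
    have hκ0 := hκ.1
    have heq := (key κ hκ0).mp hP
    by_contra hle
    push_neg at hle
    have h1 : Real.sinh (a*κ) < (a*κ) * Real.cosh (a*κ) := aux_sinh_lt _ (mul_pos ha hκ0)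
    have hcpos : 0 < Real.cosh (a*κ) := Real.cosh_pos _
    nlinarith [mul_le_mul_of_nonneg_right (mul_le_mul_of_nonneg_right hle hκ0.le) hcpos.le]
  -- existence when ℓ₄ < a
  have exist : ℓ₄ < a → ∃ κ ∈ Set.Ioo (0 : ℝ) ℓ₄⁻¹,
      (1 - κ ^ 2 * ℓ₄ ^ 2) * Real.cosh (2 * κ * a) = κ ^ 2 * ℓ₄ ^ 2 + 1 := by
    intro hla
    set F : ℝ → ℝ := fun x => Real.sinh (a*x) / Real.cosh (a*x) - ℓ₄ * x with hF
    have hFc : Continuous F := by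
      apply Continuous.sub _ (by fun_prop)
      exact Continuous.div (by fun_prop) (by fun_prop) (fun x => (Real.cosh_pos _).ne')
    -- find small x₀ with F x₀ > 0
    have htend : Tendsto (fun x => ℓ₄ * Real.cosh (a*x)) (nhdsWithin 0 (Set.Ioi 0)) (nhds (ℓ₄ * 1)) := by
      apply Filter.Tendsto.mono_left _ nhdsWithin_le_nhds
      have : Continuous (fun x => ℓ₄ * Real.cosh (a*x)) := by fun_prop
      simpa using this.tendsto 0
    have hev1 : ∀ᶠ x in nhdsWithin (0:ℝ) (Set.Ioi 0), ℓ₄ * Real.cosh (a*x) < a :=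
      htend.eventually_lt_const (by linarith)
    have hev2 : ∀ᶠ x in nhdsWithin (0:ℝ) (Set.Ioi 0), x < 2/ℓ₄ := by
      apply Filter.Eventually.filter_mono nhdsWithin_le_nhds
      exact eventually_lt_nhds (by positivity)
    obtain ⟨x₀, hx₀c, hx₀2, hx₀pos⟩ := (hev1.and (hev2.and self_mem_nhdsWithin)).exists
    have hx₀pos : (0:ℝ) < x₀ := hx₀pos
    -- F x₀ > 0
    have hFx₀ : 0 < F x₀ := by
      have hcpos : 0 < Real.cosh (a*x₀) := Real.cosh_pos _
      have hsl : a * x₀ < Real.sinh (a*x₀) := Real.self_lt_sinh_iff.mpr (mul_pos ha hx₀pos)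
      have : ℓ₄ * x₀ < Real.sinh (a*x₀) / Real.cosh (a*x₀) := by
        rw [lt_div_iff₀ hcpos]
        nlinarith
      simp only [hF]
      linarith
    -- F (2/ℓ₄) < 0
    have hFb : F (2/ℓ₄) < 0 := by
      have hcpos : 0 < Real.cosh (a*(2/ℓ₄)) := Real.cosh_pos _
      have h1 : Real.sinh (a*(2/ℓ₄)) / Real.cosh (a*(2/ℓ₄)) < 1 :=
        (div_lt_one hcpos).mpr (Real.sinh_lt_cosh _)
      have h2 : ℓ₄ * (2/ℓ₄) = 2 := by field_simp
      simp only [hF, h2]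
      linarith
    -- IVT
    have hle : x₀ ≤ 2/ℓ₄ := hx₀2.le
    have := intermediate_value_Icc' hle hFc.continuousOn
    have h0mem : (0:ℝ) ∈ Set.Icc (F (2/ℓ₄)) (F x₀) := ⟨hFb.le, hFx₀.le⟩
    obtain ⟨κ, hκmem, hκ0⟩ := this h0mem
    have hκpos : 0 < κ := lt_of_lt_of_le hx₀pos hκmem.1
    have hcpos : 0 < Real.cosh (a*κ) := Real.cosh_pos _
    have hseq : Real.sinh (a*κ) = ℓ₄ * κ * Real.cosh (a*κ) := by
      have : Real.sinh (a*κ) / Real.cosh (a*κ) = ℓ₄ * κ := by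
        have : F κ = 0 := hκ0
        simp only [hF] at this
        linarith
      field_simp at this
      linarith
    have hκlt : κ < ℓ₄⁻¹ := by
      have h1 : Real.sinh (a*κ) < Real.cosh (a*κ) := Real.sinh_lt_cosh _
      have h2 : ℓ₄ * κ < 1 := by nlinarith
      calc κ = (ℓ₄ * κ) * ℓ₄⁻¹ := by field_simp
      _ < 1 * ℓ₄⁻¹ := by
          apply mul_lt_mul_of_pos_right h2 (by positivity)
      _ = ℓ₄⁻¹ := one_mul _
    exact ⟨κ, ⟨hκpos, hκlt⟩, (key κ hκpos).mpr hseq⟩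
  refine ⟨⟨fun ⟨κ, hκ, hP⟩ => sol_imp κ hκ hP, exist⟩, ?_⟩
  intro hla
  obtain ⟨κ, hκ, hP⟩ := exist hla
  refine ⟨κ, ⟨hκ, hP⟩, ?_⟩
  rintro κ' ⟨hκ', hP'⟩
  -- uniqueness via strict antitonicity
  have hval : ∀ x ∈ Set.Ioo (0:ℝ) ℓ₄⁻¹,
      (1 - x ^ 2 * ℓ₄ ^ 2) * Real.cosh (2 * x * a) = x ^ 2 * ℓ₄ ^ 2 + 1 →
      Real.sinh (a*x) / Real.cosh (a*x) / x = ℓ₄ := by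
    intro x hx hPx
    have hx0 := hx.1
    have hs := (key x hx0).mp hPx
    rw [hs]
    field_simp
  have h1 := hval κ hκ hP
  have h2 := hval κ' hκ' hP'
  by_contra hne
  rcases lt_or_gt_of_ne hne with h | h
  · have := aux_anti a ha hκ'.1 hκ.1 h
    simp only [h1, h2, lt_self_iff_false] at this
  · have := aux_anti a ha hκ.1 hκ'.1 h
    simp only [h1, h2, lt_self_iff_false] at this
end
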